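/- Let s be a schedule, x an object, and t1, t2, t3 three pairwise distinct transactions such that the conflict graph of s contains directed edges t1 → t2, t2 → t3, and t3 → t1, each on object x. Then there exist two distinct transactions u and v among {t1, t2, t3} such that the conflict graph of s contains both the edge u → v and the edge v → u, each on object x (i.e., the 3-transaction single-object conflict cycle can be reduced to a conflict cycle between two transactions). -/
import Mathlib


/-- The kind of an operation: read or write. -/
inductive OpKind where
  | read : OpKind
  | write : OpKind
deriving DecidableEq

/-- An operation: a transaction identifier, an object identifier, and a kind. -/
structure Op where
  txn : ℕ
  obj : ℕ
  kind : OpKind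

/-- The conflict graph of schedule `s` has an edge on object `x` from `t₁` to `t₂`:
some operation of `t₁` on `x` conflicts with a later-positioned operation of `t₂` on `x`. -/
def ConflictEdgeOn (s : List Op) (x t₁ t₂ : ℕ) : Prop :=
  ∃ (i j : ℕ) (p q : Op), i < j ∧ s[i]? = some p ∧ s[j]? = some q ∧
    p.txn = t₁ ∧ q.txn = t₂ ∧ t₁ ≠ t₂ ∧
    p.obj = x ∧ q.obj = x ∧
    (p.kind = OpKind.write ∨ q.kind = OpKind.write)

private lemma ne_pos_of_ne_txn {s : List Op} {k i : ℕ} {w p : Op}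
    (hw : s[k]? = some w) (hp : s[i]? = some p) (h : w.txn ≠ p.txn) : k ≠ i := by
  intro h'
  subst h'
  rw [hw] at hp
  exact h (by rw [Option.some_inj.mp hp])

private lemma orSwap23 {P Q R : Prop} : (P ∨ Q ∨ R) → (P ∨ R ∨ Q) :=
  fun h => h.imp id Or.symm

private lemma orSwap12 {P Q R : Prop} : (P ∨ Q ∨ R) → (Q ∨ P ∨ R) :=
  fun h => h.elim (fun h => Or.inr (Or.inl h)) (fun h => h.elim Or.inl (Or.inr ∘ Or.inr))

private lemma orRev {P Q R : Prop} : (P ∨ Q ∨ R) → (R ∨ Q ∨ P) :=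
  fun h => h.elim (Or.inr ∘ Or.inr) (fun h => h.elim (Or.inr ∘ Or.inl) Or.inl)

/-- Key lemma: if `w` is a minimal-position write on `x` among the three
transactions and belongs to `a`, then the edges `c → a` and `d → c` suffice
to produce a two-transaction cycle. -/
private lemma key_lemma (s : List Op) (x a c d : ℕ)
    (hac : a ≠ c) (hcd : c ≠ d) (had : a ≠ d)
    (k : ℕ) (w : Op) (hwk : s[k]? = some w) (hwt : w.txn = a)
    (hwo : w.obj = x) (hwW : w.kind = OpKind.write)
    (hmin : ∀ m o, s[m]? = some o → o.obj = x → o.kind = OpKind.write →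
      (o.txn = a ∨ o.txn = c ∨ o.txn = d) → k ≤ m)
    (eca : ConflictEdgeOn s x c a) (edc : ConflictEdgeOn s x d c) :
    ∃ u v : ℕ, u ≠ v ∧ (u = a ∨ u = c ∨ u = d) ∧ (v = a ∨ v = c ∨ v = d) ∧
      ConflictEdgeOn s x u v ∧ ConflictEdgeOn s x v u := by
  obtain ⟨i, j, p, q, hij, hp, hq, hpt, hqt, hne, hpx, hqx, hwrt⟩ := eca
  have hki : k ≠ i := ne_pos_of_ne_txn hwk hp (by rw [hwt, hpt]; exact hac)
  rcases lt_or_gt_of_ne hki with hki' | hik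
  · -- k < i : edge a → c via w (write) and p
    refine ⟨a, c, hac, Or.inl rfl, Or.inr (Or.inl rfl),
      ⟨k, i, w, p, hki', hwk, hp, hwt, hpt, hac, hwo, hpx, Or.inl hwW⟩,
      ⟨i, j, p, q, hij, hp, hq, hpt, hqt, hne, hpx, hqx, hwrt⟩⟩
  · -- i < k : examine edge d → c
    obtain ⟨i', j', p', q', hij', hp', hq', hpt', hqt', hne', hpx', hqx', hwrt'⟩ := edc
    rcases hwrt' with hpW | hqW
    · -- p' is a write by d at i' ; minimality gives k < i', so i < i' : edge c → d
      have hk : k ≤ i' := hmin i' p' hp' hpx' hpW (Or.inr (Or.inr hpt'))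
      have hki' : k ≠ i' := ne_pos_of_ne_txn hwk hp' (by rw [hwt, hpt']; exact had)
      have hii' : i < i' := lt_of_lt_of_le hik (lt_of_le_of_ne hk hki').le
      refine ⟨c, d, hcd, Or.inr (Or.inl rfl), Or.inr (Or.inr rfl),
        ⟨i, i', p, p', hii', hp, hp', hpt, hpt', hcd, hpx, hpx', Or.inr hpW⟩,
        ⟨i', j', p', q', hij', hp', hq', hpt', hqt', hne', hpx', hqx', Or.inl hpW⟩⟩
    · -- q' is a write by c at j' ; minimality gives k < j' : edge a → c
      have hk : k ≤ j' := hmin j' q' hq' hqx' hqW (Or.inr (Or.inl hqt'))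
      have hkj' : k ≠ j' := ne_pos_of_ne_txn hwk hq' (by rw [hwt, hqt']; exact hac)
      refine ⟨a, c, hac, Or.inl rfl, Or.inr (Or.inl rfl),
        ⟨k, j', w, q', lt_of_le_of_ne hk hkj', hwk, hq', hwt, hqt', hac, hwo, hqx',
          Or.inl hwW⟩,
        ⟨i, j, p, q, hij, hp, hq, hpt, hqt, hne, hpx, hqx, hwrt⟩⟩

/-- A 3-transaction single-object conflict cycle can be reduced to a conflict
cycle between two transactions. -/
theorem three_txn_single_object_cycle_reduces
    (s : List Op) (x t₁ t₂ t₃ : ℕ)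
    (h12 : t₁ ≠ t₂) (h13 : t₁ ≠ t₃) (h23 : t₂ ≠ t₃)
    (e1 : ConflictEdgeOn s x t₁ t₂)
    (e2 : ConflictEdgeOn s x t₂ t₃)
    (e3 : ConflictEdgeOn s x t₃ t₁) :
    ∃ u v : ℕ, u ≠ v ∧ u ∈ ({t₁, t₂, t₃} : Set ℕ) ∧ v ∈ ({t₁, t₂, t₃} : Set ℕ) ∧
      ConflictEdgeOn s x u v ∧ ConflictEdgeOn s x v u := by
  classical
  -- there exists a write on x by one of the three transactions (from e1)
  set P : ℕ → Prop := fun m => ∃ o : Op, s[m]? = some o ∧ o.obj = x ∧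
    o.kind = OpKind.write ∧ (o.txn = t₁ ∨ o.txn = t₂ ∨ o.txn = t₃) with hP
  have hex : ∃ m, P m := by
    obtain ⟨i, j, p, q, hij, hp, hq, hpt, hqt, hne, hpx, hqx, hwrt⟩ := e1
    rcases hwrt with hW | hW
    · exact ⟨i, p, hp, hpx, hW, Or.inl hpt⟩
    · exact ⟨j, q, hq, hqx, hW, Or.inr (Or.inl hqt)⟩
  set k := Nat.find hex with hk
  obtain ⟨w, hwk, hwo, hwW, hwt⟩ := Nat.find_spec hex
  have hmin : ∀ m (o : Op), s[m]? = some o → o.obj = x → o.kind = OpKind.write →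
      (o.txn = t₁ ∨ o.txn = t₂ ∨ o.txn = t₃) → k ≤ m := by
    intro m o h1 h2 h3 h4
    exact Nat.find_le ⟨o, h1, h2, h3, h4⟩
  have conv : ∀ u v : ℕ,
      (u ≠ v ∧ (u = t₁ ∨ u = t₂ ∨ u = t₃) ∧ (v = t₁ ∨ v = t₂ ∨ v = t₃) ∧
        ConflictEdgeOn s x u v ∧ ConflictEdgeOn s x v u) →
      (u ≠ v ∧ u ∈ ({t₁, t₂, t₃} : Set ℕ) ∧ v ∈ ({t₁, t₂, t₃} : Set ℕ) ∧
        ConflictEdgeOn s x u v ∧ ConflictEdgeOn s x v u) := by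
    intro u v ⟨h1, h2, h3, h4, h5⟩
    exact ⟨h1, by simpa using h2, by simpa using h3, h4, h5⟩
  rcases hwt with hwt | hwt | hwt
  · -- earliest write belongs to t₁ : use edges t₃ → t₁ and t₂ → t₃
    obtain ⟨u, v, h1, h2, h3, h4, h5⟩ :=
      key_lemma s x t₁ t₃ t₂ h13 (Ne.symm h23) h12 k w hwk hwt hwo hwW
        (fun m o a b c d => hmin m o a b c (orSwap23 d)) e3 e2
    exact ⟨u, v, conv u v ⟨h1, orSwap23 h2, orSwap23 h3, h4, h5⟩⟩
  · -- earliest write belongs to t₂ : use edges t₁ → t₂ and t₃ → t₁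
    obtain ⟨u, v, h1, h2, h3, h4, h5⟩ :=
      key_lemma s x t₂ t₁ t₃ (Ne.symm h12) h13 h23 k w hwk hwt hwo hwW
        (fun m o a b c d => hmin m o a b c (orSwap12 d)) e1 e3
    exact ⟨u, v, conv u v ⟨h1, orSwap12 h2, orSwap12 h3, h4, h5⟩⟩
  · -- earliest write belongs to t₃ : use edges t₂ → t₃ and t₁ → t₂
    obtain ⟨u, v, h1, h2, h3, h4, h5⟩ :=
      key_lemma s x t₃ t₂ t₁ (Ne.symm h23) (Ne.symm h12) (Ne.symm h13) k w hwk hwt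
        hwo hwW (fun m o a b c d => hmin m o a b c (orRev d)) e2 e1
    exact ⟨u, v, conv u v ⟨h1, orRev h2, orRev h3, h4, h5⟩⟩
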